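/- Uniqueness for the graph wave equation: if u₁ and u₂ both solve ∂_t²u − Δ_Ω u = f on (0,∞)×Ω° with u(0,·)=g, ∂_t u(0,·)=h on Ω° and u=0 on [0,∞)×∂Ω, and Ω is connected, then u₁ = u₂ on [0,∞)×Ω. -/

import Mathlib

open Finset

/-!
The difference `w = u₁ - u₂` solves the homogeneous problem with zero data. For symmetric
weights, summation by parts (the discrete Green formula) shows that the energy
`∑ μ (∂ₜw)² + ½ ∑∑ ω (w y - w x)²` is constant in time. It vanishes at `t = 0`, and since
`μ > 0` and `ω ≥ 0` it dominates `μ (∂ₜw)²`; hence `∂ₜw ≡ 0` and `w ≡ w(0) = 0`.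
-/

/-- Graph (Dirichlet) Laplacian. -/
noncomputable def graphLap {V : Type*} [Fintype V] (ω : V → V → ℝ) (μ : V → ℝ)
    (u : V → ℝ) (x : V) : ℝ :=
  (1 / μ x) * ∑ y, ω x y * (u y - u x)

theorem eq_of_hasDerivWithinAt_Ici_of_eq_zero {f f' : ℝ → ℝ} {a t : ℝ}
    (hf : ∀ s ∈ Set.Ici a, HasDerivWithinAt f (f' s) (Set.Ici a) s)
    (hf' : ∀ s, a < s → f' s = 0) (ht : a ≤ t) : f t = f a := by
  rcases ht.eq_or_lt with rfl | ht
  · rfl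
  have hcont : ContinuousOn f (Set.Icc a t) := fun s hs =>
    (hf s hs.1).continuousWithinAt.mono Set.Icc_subset_Ici_self
  have hderiv : ∀ s ∈ Set.Ioo a t, HasDerivAt f (f' s) s := fun s hs =>
    (hf s hs.1.le).hasDerivAt (Ici_mem_nhds hs.1)
  obtain ⟨c, hc, hslope⟩ := exists_hasDerivAt_eq_slope f f' ht hcont hderiv
  rw [hf' c hc.1, eq_comm, div_eq_zero_iff, sub_eq_zero, sub_eq_zero] at hslope
  exact hslope.resolve_right ht.ne'

section
variable {V : Type*} [Fintype V] (ω : V → V → ℝ) (μ : V → ℝ)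

theorem graphLap_sub (u v : V → ℝ) (x : V) :
    graphLap ω μ (u - v) x = graphLap ω μ u x - graphLap ω μ v x := by
  simp only [graphLap, Pi.sub_apply, ← mul_sub, ← sum_sub_distrib]
  congr 1
  exact sum_congr rfl fun y _ => by ring

theorem sum_mul_graphLap (hsymm : ∀ x y, ω x y = ω y x) (hμ : ∀ x, μ x ≠ 0) (u v : V → ℝ) :
    ∑ x, μ x * v x * graphLap ω μ u x
      = -(1 / 2) * ∑ x, ∑ y, ω x y * (u y - u x) * (v y - v x) := by
  have hswap : ∑ x, ∑ y, ω x y * (u y - u x) * v y = -∑ x, ∑ y, ω x y * (u y - u x) * v x := by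
    rw [sum_comm, ← sum_neg_distrib]
    refine sum_congr rfl fun x _ => ?_
    rw [← sum_neg_distrib]
    exact sum_congr rfl fun y _ => by rw [hsymm]; ring
  have hsplit : ∑ x, ∑ y, ω x y * (u y - u x) * (v y - v x)
      = ∑ x, ∑ y, ω x y * (u y - u x) * v y - ∑ x, ∑ y, ω x y * (u y - u x) * v x := by
    simp only [mul_sub, sum_sub_distrib]
  have hlap : ∑ x, μ x * v x * graphLap ω μ u x = ∑ x, ∑ y, ω x y * (u y - u x) * v x :=
    sum_congr rfl fun x _ => by rw [graphLap, ← sum_mul]; field_simp [hμ x]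
  rw [hsplit, hswap, hlap]
  ring

/-- Twice the physical energy of the state `(u, ∂ₜu) = (u, v)`; the double sum counts every
edge twice. -/
noncomputable def waveEnergy (u v : V → ℝ) : ℝ :=
  ∑ x, μ x * v x ^ 2 + (1 / 2) * ∑ x, ∑ y, ω x y * (u y - u x) ^ 2

theorem hasDerivWithinAt_waveEnergy (hsymm : ∀ x y, ω x y = ω y x) (hμ : ∀ x, μ x ≠ 0)
    {u v a : ℝ → V → ℝ} {s : Set ℝ} {t : ℝ}
    (hu : ∀ x, HasDerivWithinAt (fun τ => u τ x) (v t x) s t)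
    (hv : ∀ x, HasDerivWithinAt (fun τ => v τ x) (a t x) s t) :
    HasDerivWithinAt (fun τ => waveEnergy ω μ (u τ) (v τ))
      (2 * ∑ x, μ x * v t x * (a t x - graphLap ω μ (u t) x)) s t := by
  have hkin : HasDerivWithinAt (fun τ => ∑ x, μ x * v τ x ^ 2)
      (2 * ∑ x, μ x * v t x * a t x) s t := by
    rw [mul_sum]
    exact HasDerivWithinAt.fun_sum fun x _ =>
      (((hv x).fun_pow 2).const_mul (μ x)).congr_deriv (by ring)
  have hpot : HasDerivWithinAt (fun τ => (1 / 2) * ∑ x, ∑ y, ω x y * (u τ y - u τ x) ^ 2)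
      (∑ x, ∑ y, ω x y * (u t y - u t x) * (v t y - v t x)) s t := by
    refine (HasDerivWithinAt.fun_sum fun x _ => HasDerivWithinAt.fun_sum fun y _ =>
      (((hu y).sub (hu x)).fun_pow 2).const_mul (ω x y)).const_mul (1 / 2 : ℝ) |>.congr_deriv ?_
    simp only [mul_sum, Pi.sub_apply]
    exact sum_congr rfl fun x _ => sum_congr rfl fun y _ => by ring
  refine (hkin.add hpot).congr_deriv ?_
  have hsplit : ∑ x, μ x * v t x * (a t x - graphLap ω μ (u t) x)
      = ∑ x, μ x * v t x * a t x - ∑ x, μ x * v t x * graphLap ω μ (u t) x := by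
    simp only [mul_sub, sum_sub_distrib]
  rw [hsplit, sum_mul_graphLap ω μ hsymm hμ]
  ring

theorem eq_zero_of_waveEnergy_eq_zero (hω : ∀ x y, 0 ≤ ω x y) (hμ : ∀ x, 0 < μ x)
    {u v : V → ℝ} (hE : waveEnergy ω μ u v = 0) : v = 0 := by
  have hkin : ∀ x ∈ univ, 0 ≤ μ x * v x ^ 2 := fun x _ => by have := hμ x; positivity
  have hpot : 0 ≤ (1 / 2 : ℝ) * ∑ x, ∑ y, ω x y * (u y - u x) ^ 2 :=
    mul_nonneg (by norm_num) (sum_nonneg fun x _ => sum_nonneg fun y _ =>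
      mul_nonneg (hω x y) (sq_nonneg _))
  have hsum : ∑ x, μ x * v x ^ 2 = 0 := by
    unfold waveEnergy at hE
    linarith [sum_nonneg hkin]
  funext x
  have := (sum_eq_zero_iff_of_nonneg hkin).1 hsum x (mem_univ x)
  simpa [(hμ x).ne'] using this

theorem eq_zero_of_homogeneous_wave (hsymm : ∀ x y, ω x y = ω y x) (hω : ∀ x y, 0 ≤ ω x y)
    (hμ : ∀ x, 0 < μ x) (Ωo : Finset V) {w v a : ℝ → V → ℝ}
    (hw : ∀ x, ∀ t ∈ Set.Ici (0 : ℝ), HasDerivWithinAt (fun s => w s x) (v t x) (Set.Ici 0) t)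
    (hv : ∀ x, ∀ t ∈ Set.Ici (0 : ℝ), HasDerivWithinAt (fun s => v s x) (a t x) (Set.Ici 0) t)
    (hwave : ∀ t, 0 < t → ∀ x ∈ Ωo, a t x = graphLap ω μ (w t) x)
    (hbdry : ∀ t, 0 ≤ t → ∀ x ∉ Ωo, w t x = 0)
    (hw₀ : ∀ x ∈ Ωo, w 0 x = 0) (hv₀ : ∀ x ∈ Ωo, v 0 x = 0) :
    ∀ t, 0 ≤ t → w t = 0 := by
  have hv_bdry : ∀ t, 0 ≤ t → ∀ x ∉ Ωo, v t x = 0 := fun t ht x hx =>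
    (uniqueDiffOn_Ici 0 t ht).eq_deriv _ (hw x t ht)
      ((hasDerivWithinAt_const t _ 0).congr (fun s hs => hbdry s hs x hx) (hbdry t ht x hx))
  have hE' : ∀ t, 0 < t → 2 * ∑ x, μ x * v t x * (a t x - graphLap ω μ (w t) x) = 0 := by
    intro t ht
    rw [sum_eq_zero fun x _ => ?_, mul_zero]
    by_cases hx : x ∈ Ωo
    · rw [hwave t ht x hx, sub_self, mul_zero]
    · rw [hv_bdry t ht.le x hx, mul_zero, zero_mul]
  have hE₀ : waveEnergy ω μ (w 0) (v 0) = 0 := by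
    have hw₀' : w 0 = 0 := funext fun x => by
      by_cases hx : x ∈ Ωo
      exacts [hw₀ x hx, hbdry 0 le_rfl x hx]
    have hv₀' : v 0 = 0 := funext fun x => by
      by_cases hx : x ∈ Ωo
      exacts [hv₀ x hx, hv_bdry 0 le_rfl x hx]
    simp [waveEnergy, hw₀', hv₀']
  have hE_const : ∀ t, 0 ≤ t → waveEnergy ω μ (w t) (v t) = waveEnergy ω μ (w 0) (v 0) :=
    fun t => eq_of_hasDerivWithinAt_Ici_of_eq_zero (fun s hs => hasDerivWithinAt_waveEnergy
      ω μ hsymm (fun x => (hμ x).ne') (fun x => hw x s hs) (fun x => hv x s hs)) hE'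
  have hv_zero : ∀ t, 0 ≤ t → v t = 0 := fun t ht =>
    eq_zero_of_waveEnergy_eq_zero ω μ hω hμ ((hE_const t ht).trans hE₀)
  intro t ht
  funext x
  by_cases hx : x ∈ Ωo
  · rw [eq_of_hasDerivWithinAt_Ici_of_eq_zero (hw x) (fun s hs => congrFun (hv_zero s hs.le) x) ht]
    exact hw₀ x hx
  · exact hbdry t ht x hx

end

theorem wave_uniqueness_general {V : Type*} [Fintype V]
    (ω : V → V → ℝ) (μ : V → ℝ)
    (hsymm : ∀ x y, ω x y = ω y x) (hnonneg : ∀ x y, 0 ≤ ω x y)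
    (hμ : ∀ x, 0 < μ x)
    (Ω Ωo : Finset V)
    (f : ℝ → V → ℝ) (g h : V → ℝ)
    (u₁ u₂ du₁ du₂ ddu₁ ddu₂ : ℝ → V → ℝ)
    (hderiv1₁ : ∀ x, ∀ t ∈ Set.Ici (0 : ℝ),
      HasDerivWithinAt (fun s => u₁ s x) (du₁ t x) (Set.Ici 0) t)
    (hderiv2₁ : ∀ x, ∀ t ∈ Set.Ici (0 : ℝ),
      HasDerivWithinAt (fun s => du₁ s x) (ddu₁ t x) (Set.Ici 0) t)
    (hderiv1₂ : ∀ x, ∀ t ∈ Set.Ici (0 : ℝ),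
      HasDerivWithinAt (fun s => u₂ s x) (du₂ t x) (Set.Ici 0) t)
    (hderiv2₂ : ∀ x, ∀ t ∈ Set.Ici (0 : ℝ),
      HasDerivWithinAt (fun s => du₂ s x) (ddu₂ t x) (Set.Ici 0) t)
    (hwave₁ : ∀ t, 0 < t → ∀ x ∈ Ωo, ddu₁ t x - graphLap ω μ (u₁ t) x = f t x)
    (hwave₂ : ∀ t, 0 < t → ∀ x ∈ Ωo, ddu₂ t x - graphLap ω μ (u₂ t) x = f t x)
    (hinit₁ : ∀ x ∈ Ωo, u₁ 0 x = g x) (hinit₂ : ∀ x ∈ Ωo, u₂ 0 x = g x)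
    (hinit₁' : ∀ x ∈ Ωo, du₁ 0 x = h x) (hinit₂' : ∀ x ∈ Ωo, du₂ 0 x = h x)
    (hbdry₁ : ∀ t, 0 ≤ t → ∀ x, x ∉ Ωo → u₁ t x = 0)
    (hbdry₂ : ∀ t, 0 ≤ t → ∀ x, x ∉ Ωo → u₂ t x = 0) :
    ∀ t, 0 ≤ t → ∀ x ∈ Ω, u₁ t x = u₂ t x := by
  intro t ht x _
  have hdiff := eq_zero_of_homogeneous_wave ω μ hsymm hnonneg hμ Ωo
    (w := u₁ - u₂) (v := du₁ - du₂) (a := ddu₁ - ddu₂)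
    (fun x t ht => (hderiv1₁ x t ht).sub (hderiv1₂ x t ht))
    (fun x t ht => (hderiv2₁ x t ht).sub (hderiv2₂ x t ht))
    (fun t ht x hx => by
      simp only [Pi.sub_apply, graphLap_sub]
      linarith [hwave₁ t ht x hx, hwave₂ t ht x hx])
    (fun t ht x hx => by simp [hbdry₁ t ht x hx, hbdry₂ t ht x hx])
    (fun x hx => by simp [hinit₁ x hx, hinit₂ x hx])
    (fun x hx => by simp [hinit₁' x hx, hinit₂' x hx]) t ht
  exact sub_eq_zero.1 (congrFun hdiff x)

/-- Uniqueness for the graph wave equation with Dirichlet boundary conditions on a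
finite connected domain: two solutions with the same data coincide on `[0,∞) × Ω`. -/
theorem wave_uniqueness {V : Type*} [Fintype V] [DecidableEq V]
    (ω : V → V → ℝ) (μ : V → ℝ)
    (hsymm : ∀ x y, ω x y = ω y x) (hnonneg : ∀ x y, 0 ≤ ω x y)
    (hμ : ∀ x, 0 < μ x)
    (Ω bd Ωo : Finset V)
    (hbd : ∀ x, x ∈ bd ↔ x ∈ Ω ∧ ∃ y, y ∉ Ω ∧ ω x y ≠ 0)
    (hΩo : Ωo = Ω \ bd) (hbdne : bd.Nonempty) (hΩone : Ωo.Nonempty)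
    (hconn : ∀ x ∈ Ω, ∀ y ∈ Ω,
      Relation.ReflTransGen (fun a b => a ∈ Ω ∧ b ∈ Ω ∧ ω a b ≠ 0) x y)
    (f : ℝ → V → ℝ) (g h : V → ℝ)
    (u₁ u₂ du₁ du₂ ddu₁ ddu₂ : ℝ → V → ℝ)
    (hderiv1₁ : ∀ x, ∀ t ∈ Set.Ici (0 : ℝ),
      HasDerivWithinAt (fun s => u₁ s x) (du₁ t x) (Set.Ici 0) t)
    (hderiv2₁ : ∀ x, ∀ t ∈ Set.Ici (0 : ℝ),
      HasDerivWithinAt (fun s => du₁ s x) (ddu₁ t x) (Set.Ici 0) t)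
    (hderiv1₂ : ∀ x, ∀ t ∈ Set.Ici (0 : ℝ),
      HasDerivWithinAt (fun s => u₂ s x) (du₂ t x) (Set.Ici 0) t)
    (hderiv2₂ : ∀ x, ∀ t ∈ Set.Ici (0 : ℝ),
      HasDerivWithinAt (fun s => du₂ s x) (ddu₂ t x) (Set.Ici 0) t)
    (hwave₁ : ∀ t, 0 < t → ∀ x ∈ Ωo, ddu₁ t x - graphLap ω μ (u₁ t) x = f t x)
    (hwave₂ : ∀ t, 0 < t → ∀ x ∈ Ωo, ddu₂ t x - graphLap ω μ (u₂ t) x = f t x)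
    (hinit₁ : ∀ x ∈ Ωo, u₁ 0 x = g x) (hinit₂ : ∀ x ∈ Ωo, u₂ 0 x = g x)
    (hinit₁' : ∀ x ∈ Ωo, du₁ 0 x = h x) (hinit₂' : ∀ x ∈ Ωo, du₂ 0 x = h x)
    (hbdry₁ : ∀ t, 0 ≤ t → ∀ x, x ∉ Ωo → u₁ t x = 0)
    (hbdry₂ : ∀ t, 0 ≤ t → ∀ x, x ∉ Ωo → u₂ t x = 0) :
    ∀ t, 0 ≤ t → ∀ x ∈ Ω, u₁ t x = u₂ t x :=
  wave_uniqueness_general ω μ hsymm hnonneg hμ Ω Ωo f g h u₁ u₂ du₁ du₂ ddu₁ ddu₂ hderiv1₁ hderiv2₁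
    hderiv1₂ hderiv2₂ hwave₁ hwave₂ hinit₁ hinit₂ hinit₁' hinit₂' hbdry₁ hbdry₂
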